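/- arXiv:2105.10370 — 4 statements merged into one kernel-verified Lean document; each statement's English description precedes it below -/
import Mathlib

section
/- Proximal three-point inequality: let g : E → (−∞, ∞] be proper closed convex and φ convex and differentiable at the relevant points. For y with φ differentiable at y, ε > 0, define P(x) := g(x) + ε·D_φ(x, y). If x̄ minimizes P over E and φ is differentiable at x̄, then for every u ∈ dom g ∩ dom φ, P(u) − P(x̄) ≥ ε·D_φ(u, x̄). -/
/-!
Since `x̄` minimizes the sum of the convex `g` and the function `ε D_φ(·, y)`, which is
differentiable at `x̄` with gradient `ε (∇φ x̄ - ∇φ y)`, the first-order optimality condition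
along the segment from `x̄` to `u` gives `g u - g x̄ + ε ⟪∇φ x̄ - ∇φ y, u - x̄⟫ ≥ 0`. The
three-point identity `D(u, y) - D(x̄, y) - D(u, x̄) = ⟪∇φ x̄ - ∇φ y, u - x̄⟫` turns this into the
claim.
-/

open RealInnerProductSpace Set

noncomputable def bregman {E : Type*} [NormedAddCommGroup E] [InnerProductSpace ℝ E]
    [FiniteDimensional ℝ E] (φ : E → ℝ) (x y : E) : ℝ :=
  φ x - φ y - ⟪gradient φ y, x - y⟫

/-- On the segment from `x` to `u`, `g + h` is majorized by the differentiable function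
`t ↦ (1 - t) g x + t g u + h (x + t (u - x))`, which agrees with it at `t = 0` and is therefore
also minimized there. -/
theorem ConvexOn.le_add_fderiv_of_isMinOn_add {E : Type*} [NormedAddCommGroup E]
    [NormedSpace ℝ E] {s : Set E} {g h : E → ℝ} {h' : E →L[ℝ] ℝ} {x u : E}
    (hg : ConvexOn ℝ s g) (hh : HasFDerivAt h h' x)
    (hmin : IsMinOn (fun z => g z + h z) s x) (hx : x ∈ s) (hu : u ∈ s) :
    g x ≤ g u + h' (u - x) := by
  set k : ℝ → ℝ := fun t => (1 - t) * g x + t * g u + h (x + t • (u - x))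
  have hline : HasDerivAt (fun t : ℝ => x + t • (u - x)) (u - x) 0 := by
    simpa using ((hasDerivAt_id (0 : ℝ)).smul_const (u - x)).const_add x
  have hk : HasDerivAt k (-1 * g x + 1 * g u + h' (u - x)) 0 := by
    have hh0 : HasFDerivAt h h' (x + (0 : ℝ) • (u - x)) := by simpa using hh
    exact (((hasDerivAt_id (0 : ℝ)).const_sub 1).mul_const (g x)).add
      ((hasDerivAt_id (0 : ℝ)).mul_const (g u)) |>.add (hh0.comp_hasDerivAt 0 hline)
  have hkmin : IsMinOn k (Icc 0 1) 0 := by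
    intro t ⟨ht0, ht1⟩
    have hseg : x + t • (u - x) = (1 - t) • x + t • u := by module
    have hmem : x + t • (u - x) ∈ s := hseg ▸ hg.1 hx hu (by linarith) ht0 (by ring)
    have hconv : g (x + t • (u - x)) ≤ (1 - t) * g x + t * g u := by
      simpa [hseg, smul_eq_mul] using hg.2 hx hu (by linarith) ht0 (by ring)
    have hmin_t := isMinOn_iff.mp hmin _ hmem
    show k 0 ≤ k t
    simp only [k, zero_smul, add_zero, sub_zero, one_mul, zero_mul]
    linarith
  have hone : (1 : ℝ) ∈ posTangentConeAt (Icc 0 1) 0 :=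
    mem_posTangentConeAt_of_segment_subset (by simp [segment_eq_Icc])
  have hderiv := hkmin.localize.hasFDerivWithinAt_nonneg hk.hasFDerivAt.hasFDerivWithinAt hone
  simp only [ContinuousLinearMap.toSpanSingleton_apply, one_smul] at hderiv
  linarith

section Bregman

variable {E : Type*} [NormedAddCommGroup E] [InnerProductSpace ℝ E] [FiniteDimensional ℝ E]

theorem hasGradientAt_bregman {φ : E → ℝ} {x : E} (y : E) (hφ : DifferentiableAt ℝ φ x) :
    HasGradientAt (bregman φ · y) (gradient φ x - gradient φ y) x := by
  rw [hasGradientAt_iff_hasFDerivAt, map_sub]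
  have hlin : HasFDerivAt (fun z => ⟪gradient φ y, z - y⟫)
      (InnerProductSpace.toDual ℝ E (gradient φ y)) x := by
    simpa only [InnerProductSpace.toDual_apply_apply, inner_sub_right] using
      (InnerProductSpace.toDual ℝ E (gradient φ y)).hasFDerivAt.sub_const ⟪gradient φ y, y⟫
  exact (hφ.hasGradientAt.hasFDerivAt.sub_const (φ y)).sub hlin

theorem bregman_sub_bregman_sub_bregman (φ : E → ℝ) (u x y : E) :
    bregman φ u y - bregman φ x y - bregman φ u x = ⟪gradient φ x - gradient φ y, u - x⟫ := by
  simp only [bregman, inner_sub_left, inner_sub_right]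
  ring

end Bregman

theorem prox_three_point_inequality_general {E : Type*} [NormedAddCommGroup E] [InnerProductSpace ℝ E]
    [FiniteDimensional ℝ E] (g φ : E → ℝ) (S T : Set E)
    (hg : ConvexOn ℝ S g) (hφ : ConvexOn ℝ T φ)
    (y : E)
    (ε : ℝ) (xbar : E) (hxbar : xbar ∈ S ∩ T)
    (hxd : DifferentiableAt ℝ φ xbar)
    (hmin : ∀ x ∈ S ∩ T, g xbar + ε * bregman φ xbar y ≤ g x + ε * bregman φ x y) :
    ∀ u ∈ S ∩ T,
      (g u + ε * bregman φ u y) - (g xbar + ε * bregman φ xbar y) ≥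
        ε * bregman φ u xbar := by
  intro u hu
  have hgST : ConvexOn ℝ (S ∩ T) g := hg.subset inter_subset_left (hg.1.inter hφ.1)
  have hopt := hgST.le_add_fderiv_of_isMinOn_add
    ((hasGradientAt_bregman y hxd).hasFDerivAt.const_mul ε) (isMinOn_iff.mpr hmin) hxbar hu
  simp only [FunLike.coe_smul, Pi.smul_apply, InnerProductSpace.toDual_apply_apply,
    smul_eq_mul] at hopt
  linear_combination hopt - ε * bregman_sub_bregman_sub_bregman φ u xbar y

theorem prox_three_point_inequality {E : Type*} [NormedAddCommGroup E] [InnerProductSpace ℝ E]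
    [FiniteDimensional ℝ E] (g φ : E → ℝ) (S T : Set E)
    (hg : ConvexOn ℝ S g) (hφ : ConvexOn ℝ T φ)
    (y : E) (hy : y ∈ interior T) (hyd : DifferentiableAt ℝ φ y)
    (ε : ℝ) (hε : 0 < ε) (xbar : E) (hxbar : xbar ∈ S ∩ T)
    (hxd : DifferentiableAt ℝ φ xbar)
    (hmin : ∀ x ∈ S ∩ T, g xbar + ε * bregman φ xbar y ≤ g x + ε * bregman φ x y) :
    ∀ u ∈ S ∩ T,
      (g u + ε * bregman φ u y) - (g xbar + ε * bregman φ xbar y) ≥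
        ε * bregman φ u xbar :=
  prox_three_point_inequality_general g φ S T hg hφ y ε xbar hxbar hxd hmin
end

section
/- Sufficient-descent-like inequality for one inexact Bregman proximal step: suppose x^+ ∈ int dom φ, x̃^+ ∈ dom f, and there exist Δ ∈ E with ‖Δ‖ ≤ η and d ∈ ∂_ν f(x̃^+) such that Δ = d + γ(∇φ(x^+) − ∇φ(x)), and D_φ(x̃^+, x^+) ≤ μ. Then for any u ∈ dom f ∩ dom φ, f(x̃^+) ≤ f(u) + γ( D_φ(u, x) − D_φ(u, x^+) − D_φ(x̃^+, x) ) + ⟨Δ, x̃^+ − u⟩ + γμ + ν. -/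
open RealInnerProductSpace

theorem sufficient_descent_like {E : Type*} [NormedAddCommGroup E]
    [InnerProductSpace ℝ E] [FiniteDimensional ℝ E]
    (f φ : E → ℝ) (Sf T : Set E) (hφ : StrictConvexOn ℝ T φ)
    (x xp : E) (hx : x ∈ interior T) (hxp : xp ∈ interior T)
    (hxd : DifferentiableAt ℝ φ x) (hxpd : DifferentiableAt ℝ φ xp)
    (xt : E) (hxt : xt ∈ Sf)
    (γ η μ ν : ℝ) (hγ : 0 < γ) (hη : 0 ≤ η) (hμ : 0 ≤ μ) (hν : 0 ≤ ν)
    (Δ dsub : E) (hΔ : ‖Δ‖ ≤ η)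
    (heq : Δ = dsub + γ • (gradient φ xp - gradient φ x))
    (hdsub : ∀ z ∈ Sf, f z ≥ f xt + ⟪dsub, z - xt⟫ - ν)
    (hclose : bregman φ xt xp ≤ μ) :
    ∀ u ∈ Sf ∩ T,
      f xt ≤ f u + γ * (bregman φ u x - bregman φ u xp - bregman φ xt x) +
        ⟪Δ, xt - u⟫ + γ * μ + ν := by
  intro u hu
  have h1 := hdsub u hu.1
  have hΔd : ⟪Δ, xt - u⟫ = ⟪dsub, xt - u⟫ + γ * ⟪gradient φ xp - gradient φ x, xt - u⟫ := by
    rw [heq]; simp [inner_add_left, real_inner_smul_left]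
  simp only [bregman, inner_sub_left, inner_sub_right] at *
  nlinarith [h1, hclose, hΔd]
end

section
/- Iteration complexity bound for the inexact Bregman proximal point algorithm: if for every k ≥ 0 it holds that γ_k^{-1}(f(x̃^{k+1}) − f(x^*)) ≤ D_φ(x^*, x^k) − D_φ(x^*, x^{k+1}) + μ_k + γ_k^{-1}(ρη_k + ν_k), and ξ_k := f(x̃^{k+1}) − f(x̃^k), then for every N ≥ 1, f(x̃^N) − f(x^*) ≤ σ_{N−1}^{-1} ( D_φ(x^*, x^0) + Σ_{k=0}^{N−1} μ_k + Σ_{k=0}^{N−1} γ_k^{-1}(ρη_k + ν_k) + Σ_{k=0}^{N−1} σ_{k−1} ξ_k ), where σ_{-1} = 0 and σ_k = Σ_{i=0}^k γ_i^{-1}. -/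
/-!
Summing the per-iteration inequality telescopes the Bregman terms, and `D ≥ 0` drops
`D(x^*, x^N)`. Abel summation rewrites `∑ γ_k⁻¹ (f(x̃^{k+1}) − f(x^*))` as
`σ_{N−1} (f(x̃^N) − f(x^*)) − ∑ σ_{k−1} ξ_k`; dividing by `σ_{N−1} > 0` gives the bound.
-/

open Finset

theorem sum_range_mul_add_sum_range_partialSum_mul_sub {R : Type*} [CommRing R]
    (w g : ℕ → R) (n : ℕ) :
    ∑ k ∈ range n, w k * g (k + 1) +
        ∑ k ∈ range n, (∑ i ∈ range k, w i) * (g (k + 1) - g k) =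
      (∑ i ∈ range n, w i) * g n := by
  induction n with
  | zero => simp
  | succ n ih =>
    simp only [sum_range_succ]
    linear_combination ih

theorem sum_range_le_of_le_sub_succ_add {α : Type*} [AddCommGroup α] [PartialOrder α]
    [IsOrderedAddMonoid α] {a b d : ℕ → α} (h : ∀ k, a k ≤ d k - d (k + 1) + b k)
    (n : ℕ) (hd : 0 ≤ d n) :
    ∑ k ∈ range n, a k ≤ d 0 + ∑ k ∈ range n, b k := by
  calc ∑ k ∈ range n, a k ≤ ∑ k ∈ range n, (d k - d (k + 1) + b k) :=
        sum_le_sum fun k _ => h k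
    _ = d 0 - d n + ∑ k ∈ range n, b k := by rw [sum_add_distrib, sum_range_sub']
    _ ≤ d 0 + ∑ k ∈ range n, b k := by gcongr; exact sub_le_self _ hd

theorem ibppa_iteration_complexity_general {E : Type*}
    (f : E → ℝ) (D : E → E → ℝ) (hD : ∀ a b, 0 ≤ D a b)
    (x xt : ℕ → E) (xstar : E)
    (γ μ η ν : ℕ → ℝ) (hγ : ∀ k, 0 < γ k)
    (ρ : ℝ)
    (hiter : ∀ k, (γ k)⁻¹ * (f (xt (k + 1)) - f xstar) ≤
      D xstar (x k) - D xstar (x (k + 1)) + μ k + (γ k)⁻¹ * (ρ * η k + ν k)) :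
    ∀ N ≥ 1,
      f (xt N) - f xstar ≤
        (∑ i ∈ Finset.range N, (γ i)⁻¹)⁻¹ *
          (D xstar (x 0) + (∑ k ∈ Finset.range N, μ k) +
            (∑ k ∈ Finset.range N, (γ k)⁻¹ * (ρ * η k + ν k)) +
            ∑ k ∈ Finset.range N,
              (∑ i ∈ Finset.range k, (γ i)⁻¹) * (f (xt (k + 1)) - f (xt k))) := by
  intro N hN
  have hσ : 0 < ∑ i ∈ range N, (γ i)⁻¹ :=
    sum_pos (fun i _ => inv_pos.2 (hγ i)) (nonempty_range_iff.2 (by omega))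
  have hsum := sum_range_le_of_le_sub_succ_add (d := fun k => D xstar (x k))
    (b := fun k => μ k + (γ k)⁻¹ * (ρ * η k + ν k))
    (fun k => (hiter k).trans_eq (add_assoc _ _ _)) N (hD _ _)
  have habel := sum_range_mul_add_sum_range_partialSum_mul_sub (fun k => (γ k)⁻¹)
    (fun k => f (xt k) - f xstar) N
  simp only [sub_sub_sub_cancel_right, sum_add_distrib] at hsum habel
  rw [le_inv_mul_iff₀ hσ]
  linarith

theorem ibppa_iteration_complexity {E : Type*} [NormedAddCommGroup E]
    (f : E → ℝ) (D : E → E → ℝ) (hD : ∀ a b, 0 ≤ D a b)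
    (x xt : ℕ → E) (xstar : E)
    (γ μ η ν : ℕ → ℝ) (hγ : ∀ k, 0 < γ k) (hμ : ∀ k, 0 ≤ μ k)
    (hη : ∀ k, 0 ≤ η k) (hν : ∀ k, 0 ≤ ν k)
    (ρ : ℝ) (hρ : 0 < ρ)
    (hiter : ∀ k, (γ k)⁻¹ * (f (xt (k + 1)) - f xstar) ≤
      D xstar (x k) - D xstar (x (k + 1)) + μ k + (γ k)⁻¹ * (ρ * η k + ν k)) :
    ∀ N ≥ 1,
      f (xt N) - f xstar ≤
        (∑ i ∈ Finset.range N, (γ i)⁻¹)⁻¹ *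
          (D xstar (x 0) + (∑ k ∈ Finset.range N, μ k) +
            (∑ k ∈ Finset.range N, (γ k)⁻¹ * (ρ * η k + ν k)) +
            ∑ k ∈ Finset.range N,
              (∑ i ∈ Finset.range k, (γ i)⁻¹) * (f (xt (k + 1)) - f (xt k))) :=
  ibppa_iteration_complexity_general f D hD x xt xstar γ μ η ν hγ ρ hiter
end

section
/- Lower and upper bounds on the acceleration product: let λ ≥ 1, π, τ₁ > 0, γ_k > 0, and let θ_k ∈ [0,1) and c_k be defined by c_0 = 1, c_{k+1} = (1−θ_k)c_k, with θ_k determined by τ₁ γ_k θ_k^λ = π c_k (1 − θ_k). Then for all N ≥ 1, (1 + (π/τ₁)^{1/λ} Σ_{k=0}^{N−1} γ_k^{-1/λ})^{-λ} ≤ c_N ≤ (1 + λ^{-1}(π/τ₁)^{1/λ} Σ_{k=0}^{N−1} γ_k^{-1/λ})^{-λ}. -/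
/-!
Put `a k = c k ^ (-1/λ)`, so that the claim becomes `1 + S_N/λ ≤ a N ≤ 1 + S_N` with
`S_N = (π/τ₁)^(1/λ) ∑_{k<N} γ_k^(-1/λ)`. Solving the defining equation of `θ_k` for `θ_k` gives
the exact identity `a (k+1) θ_k = (π/τ₁)^(1/λ) γ_k^(-1/λ)`, while
`a (k+1) - a k = a (k+1) (1 - (1 - θ_k)^(1/λ))`, and `θ/λ ≤ 1 - (1 - θ)^(1/λ) ≤ θ` by Bernoulli's
inequality and monotonicity of `x ↦ x^(1/λ)` on `[0, 1]`. Summing these increments telescopes.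
-/

open Real Finset

theorem mul_le_one_sub_one_sub_rpow {p θ : ℝ} (hp0 : 0 ≤ p) (hp1 : p ≤ 1) (hθ : θ ≤ 1) :
    p * θ ≤ 1 - (1 - θ) ^ p := by
  have := rpow_one_add_le_one_add_mul_self (s := -θ) (by linarith) hp0 hp1
  rw [← sub_eq_add_neg] at this
  linarith

theorem one_sub_one_sub_rpow_le {p θ : ℝ} (hp : p ≤ 1) (hθ0 : 0 ≤ θ) (hθ1 : θ ≤ 1) :
    1 - (1 - θ) ^ p ≤ θ := by
  linarith [self_le_rpow_of_le_one (sub_nonneg.2 hθ1) (sub_le_self 1 hθ0) hp]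

theorem mul_rpow_neg_sub_rpow_neg {s x : ℝ} (hs : 0 < s) (hx : 0 ≤ x) (p : ℝ) :
    (s * x) ^ (-p) - x ^ (-p) = (s * x) ^ (-p) * (1 - s ^ p) := by
  have hsp : s ^ (-p) * s ^ p = 1 := by rw [← rpow_add hs, neg_add_cancel, rpow_zero]
  rw [mul_rpow hs.le hx]
  linear_combination x ^ (-p) * hsp

theorem rpow_neg_one_div_mul_eq_of_rpow_eq {lam θ b x : ℝ} (hlam : lam ≠ 0) (hθ : 0 ≤ θ)
    (hb : 0 ≤ b) (hx : 0 < x) (h : θ ^ lam = b * x) : x ^ (-(1 / lam)) * θ = b ^ (1 / lam) := by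
  have hθ_eq : θ = b ^ (1 / lam) * x ^ (1 / lam) := by
    rw [← mul_rpow hb hx.le, ← h, one_div, rpow_rpow_inv hθ hlam]
  rw [hθ_eq, rpow_neg hx.le]
  field_simp [(rpow_pos_of_pos hx (1 / lam)).ne']

theorem rpow_neg_one_div_rpow_neg {lam x : ℝ} (hlam : lam ≠ 0) (hx : 0 ≤ x) :
    (x ^ (-(1 / lam))) ^ (-lam) = x := by
  rw [← rpow_mul hx, neg_mul_neg, one_div_mul_cancel hlam, rpow_one]

theorem sum_range_le_sub_le_sum_range {M : Type*} [AddCommGroup M] [PartialOrder M]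
    [IsOrderedAddMonoid M] {a l u : ℕ → M}
    (h : ∀ k, l k ≤ a (k + 1) - a k ∧ a (k + 1) - a k ≤ u k) (N : ℕ) :
    ∑ k ∈ range N, l k ≤ a N - a 0 ∧ a N - a 0 ≤ ∑ k ∈ range N, u k := by
  rw [← sum_range_sub]
  exact ⟨sum_le_sum fun k _ => (h k).1, sum_le_sum fun k _ => (h k).2⟩

theorem acceleration_step_bounds {lam pii tau1 γ θ c c' : ℝ} (hlam : 1 ≤ lam) (hpi : 0 ≤ pii)
    (htau : 0 < tau1) (hγ : 0 < γ) (hθ : θ ∈ Set.Ico (0 : ℝ) 1) (hc : 0 < c)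
    (hc' : c' = (1 - θ) * c) (heq : tau1 * γ * θ ^ lam = pii * c * (1 - θ)) :
    lam⁻¹ * ((pii / tau1) ^ (1 / lam) * γ ^ (-(1 / lam))) ≤ c' ^ (-(1 / lam)) - c ^ (-(1 / lam)) ∧
      c' ^ (-(1 / lam)) - c ^ (-(1 / lam)) ≤ (pii / tau1) ^ (1 / lam) * γ ^ (-(1 / lam)) := by
  obtain ⟨hθ0, hθ1⟩ := hθ
  have hlam0 : 0 < lam := one_pos.trans_le hlam
  have hp1 : 1 / lam ≤ 1 := (div_le_one hlam0).2 hlam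
  have hc'pos : 0 < c' := hc' ▸ mul_pos (sub_pos.2 hθ1) hc
  have hθ_scaled : c' ^ (-(1 / lam)) * θ = (pii / tau1) ^ (1 / lam) * γ ^ (-(1 / lam)) := by
    have hθlam : θ ^ lam = (pii / tau1 * γ⁻¹) * c' := by
      rw [hc']
      field_simp
      linarith
    rw [rpow_neg_one_div_mul_eq_of_rpow_eq hlam0.ne' hθ0 (by positivity) hc'pos hθlam,
      mul_rpow (by positivity) (by positivity), inv_rpow hγ.le, rpow_neg hγ.le]
  rw [hc', mul_rpow_neg_sub_rpow_neg (sub_pos.2 hθ1) hc.le, ← hc', ← hθ_scaled]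
  constructor
  · calc lam⁻¹ * (c' ^ (-(1 / lam)) * θ) = c' ^ (-(1 / lam)) * (1 / lam * θ) := by ring
      _ ≤ _ := mul_le_mul_of_nonneg_left (mul_le_one_sub_one_sub_rpow (by positivity) hp1 hθ1.le)
          (by positivity)
  · exact mul_le_mul_of_nonneg_left (one_sub_one_sub_rpow_le hp1 hθ0 hθ1.le) (by positivity)

theorem acceleration_product_bounds (lam pii tau1 : ℝ)
    (hlam : 1 ≤ lam) (hpi : 0 < pii) (htau : 0 < tau1)
    (γ θ c : ℕ → ℝ) (hγ : ∀ k, 0 < γ k)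
    (hθ : ∀ k, θ k ∈ Set.Ico (0 : ℝ) 1)
    (hc0 : c 0 = 1) (hcrec : ∀ k, c (k + 1) = (1 - θ k) * c k)
    (heq : ∀ k, tau1 * γ k * θ k ^ lam = pii * c k * (1 - θ k)) :
    ∀ N ≥ 1,
      (1 + (pii / tau1) ^ (1 / lam) *
          ∑ k ∈ Finset.range N, γ k ^ (-(1 / lam))) ^ (-lam) ≤ c N ∧
      c N ≤ (1 + lam⁻¹ * (pii / tau1) ^ (1 / lam) *
          ∑ k ∈ Finset.range N, γ k ^ (-(1 / lam))) ^ (-lam) := by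
  intro N _
  have hlam0 : 0 < lam := one_pos.trans_le hlam
  have hc : ∀ k, 0 < c k := fun k => by
    induction k with
    | zero => simp [hc0]
    | succ k ih => rw [hcrec]; exact mul_pos (sub_pos.2 (hθ k).2) ih
  obtain ⟨hlow, hup⟩ := sum_range_le_sub_le_sum_range (a := fun k => c k ^ (-(1 / lam)))
    (fun k => acceleration_step_bounds hlam hpi.le htau (hγ k) (hθ k) (hc k) (hcrec k) (heq k)) N
  simp only [hc0, one_rpow, ← mul_sum] at hlow hup
  rw [mul_assoc, ← rpow_neg_one_div_rpow_neg hlam0.ne' (hc N).le]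
  have hS : 0 ≤ (pii / tau1) ^ (1 / lam) * ∑ k ∈ range N, γ k ^ (-(1 / lam)) :=
    mul_nonneg (by positivity) (sum_nonneg fun k _ => (rpow_pos_of_pos (hγ k) _).le)
  constructor
  · exact rpow_le_rpow_of_nonpos (rpow_pos_of_pos (hc N) _) (by linarith) (by linarith)
  · exact rpow_le_rpow_of_nonpos (by positivity) (by linarith) (by linarith)
end
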